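/- arXiv:2007.10155 — 3 statements merged into one kernel-verified Lean document; each statement's English description precedes it below -/
import Mathlib

section
/- Let D_a = {0, 1, ..., N1-1} ∪ {N1*(k+1) - 1 : k = 0, 1, ..., N2-1} be the element positions of a 1-D nested array with dense subarray of N1 elements and sparse subarray of N2 elements with spacing N1. Then the difference set {w1 - w2 : w1, w2 ∈ D_a} contains every integer in the interval [-(N1*N2 - 1), N1*N2 - 1]. -/
/-- Element positions of a 1-D nested array: a dense subarray `{0, 1, ..., N1-1}`
and a sparse subarray `{N1*(k+1) - 1 : 0 ≤ k < N2}`. -/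
def nestedArray (N1 N2 : ℕ) : Set ℤ :=
  {w | 0 ≤ w ∧ w < (N1 : ℤ)} ∪ {w | ∃ k : ℕ, k < N2 ∧ w = (N1 : ℤ) * (k + 1) - 1}

lemma nested_aux (N1 N2 : ℕ) (hN1 : 0 < N1) (hN2 : 0 < N2) (d : ℤ)
    (hd0 : 0 ≤ d) (hd : d ≤ (N1 : ℤ) * N2 - 1) :
    ∃ w1 ∈ nestedArray N1 N2, ∃ w2 ∈ nestedArray N1 N2, d = w1 - w2 := by
  set k : ℕ := d.toNat / N1 with hk
  have hle' : N1 * k ≤ d.toNat := by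
    have := Nat.div_mul_le_self d.toNat N1
    calc N1 * k = d.toNat / N1 * N1 := by rw [hk, Nat.mul_comm]
    _ ≤ d.toNat := this
  have hlt : d.toNat < N1 * (k + 1) := Nat.lt_mul_div_succ d.toNat hN1
  have hkN2 : k < N2 := by
    have hc1 : ((N2*N1 : ℕ) : ℤ) = (N1:ℤ)*N2 := by push_cast; ring
    have hc2 : ((d.toNat : ℤ)) = d := Int.toNat_of_nonneg hd0
    have hdlt : d.toNat < N2 * N1 := by omega
    exact (Nat.div_lt_iff_lt_mul hN1).2 hdlt
  refine ⟨(N1 : ℤ) * (k + 1) - 1, Or.inr ⟨k, hkN2, rfl⟩,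
    (N1 : ℤ) * (k + 1) - 1 - d, Or.inl ⟨?_, ?_⟩, by ring⟩
  · have : (d.toNat : ℤ) < (N1 : ℤ) * (k + 1) := by exact_mod_cast hlt
    omega
  · have : ((N1 : ℤ)) * k ≤ (d.toNat : ℤ) := by exact_mod_cast hle'
    have h2 : (N1 : ℤ) * (k + 1) = N1 * k + N1 := by ring
    omega

theorem nested_array_difference_coarray_hole_free (N1 N2 : ℕ)
    (hN1 : 0 < N1) (hN2 : 0 < N2) (d : ℤ)
    (hd : -((N1 : ℤ) * N2 - 1) ≤ d ∧ d ≤ (N1 : ℤ) * N2 - 1) :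
    ∃ w1 ∈ nestedArray N1 N2, ∃ w2 ∈ nestedArray N1 N2, d = w1 - w2 := by
  rcases le_or_gt 0 d with h | h
  · exact nested_aux N1 N2 hN1 hN2 d h hd.2
  · obtain ⟨w1, h1, w2, h2, he⟩ := nested_aux N1 N2 hN1 hN2 (-d) (by omega) (by omega)
    exact ⟨w2, h2, w1, h1, by omega⟩
end

section
/- For real ρ ∈ (0,1) and positive integer v, the Bessel function of the first kind J_v(vρ) is strictly increasing as a function of ρ, i.e., ∂J_v(vρ)/∂ρ > 0; consequently J_v(vρ) < J_v(v). -/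
open Real

/-- Bessel function of the first kind of integer order `v`, using Bessel's integral
representation `J_v(x) = (1/π) ∫₀^π cos (vϑ − x sin ϑ) dϑ`. -/
noncomputable def besselJ (v : ℤ) (x : ℝ) : ℝ :=
  (1 / π) * ∫ ϑ in (0 : ℝ)..π, Real.cos (v * ϑ - x * Real.sin ϑ)

/-!
Write `J⁽ᵏ⁾` for the `k`-th derivative of `J = J_v`, obtained by differentiating Bessel's integral
under the integral sign. The recurrence `2 J_m⁽ᵏ⁺¹⁾ = J_{m-1}⁽ᵏ⁾ - J_{m+1}⁽ᵏ⁾` gives `J⁽ᵏ⁾(0) = 0`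
for `k < v` and `J⁽ᵛ⁾(0) = 2⁻ᵛ > 0`, so `J'` is positive just to the right of `0`. If `J'` had a
first zero `x ∈ (0, v)`, then `J(x) > J(0) = 0`, and Bessel's equation
`x² J'' + x J' + (x² - v²) J = 0` would force `J''(x) > 0`, which is impossible at the first zero
of a function that is positive before it. Hence `J' > 0` on `(0, v)`.
-/

open intervalIntegral Set Filter Topology

/-- The `k`-th derivative of `besselJ v`: each differentiation in `x` multiplies the integrand by
`sin ϑ` and shifts the phase of the cosine by `-π/2`. -/
noncomputable def besselJDeriv (v : ℤ) (k : ℕ) (x : ℝ) : ℝ :=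
  (1 / π) * ∫ ϑ in (0 : ℝ)..π, sin ϑ ^ k * cos (v * ϑ - x * sin ϑ - k * (π / 2))

lemma pos_on_Ioo_of_deriv_pos_at_first_zero {g g' : ℝ → ℝ} {a b c : ℝ}
    (hg : ∀ x, HasDerivAt g (g' x) x) (hac : a < c) (hstart : ∀ x ∈ Ioo a c, 0 < g x)
    (hfirst : ∀ x ∈ Ioo a b, g x = 0 → (∀ y ∈ Ioo a x, 0 < g y) → 0 < g' x) :
    ∀ x ∈ Ioo a b, 0 < g x := by
  intro y hy
  by_contra! hgy
  obtain ⟨c₀, hc₀⟩ := nonempty_Ioo.2 hac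
  have hcy : c ≤ y := not_lt.1 fun h ↦ (hstart y ⟨hy.1, h⟩).not_ge hgy
  set S := Icc c₀ y ∩ g ⁻¹' Iic 0
  have hS : IsClosed S := isClosed_Icc.inter (isClosed_Iic.preimage (continuous_iff_continuousAt.2
    fun x ↦ (hg x).continuousAt))
  have hyS : y ∈ S := ⟨⟨by linarith [hc₀.2], le_rfl⟩, hgy⟩
  have hSbdd : BddBelow S := ⟨c₀, fun z hz ↦ hz.1.1⟩
  set x₀ := sInf S
  have hx₀S : x₀ ∈ S := hS.csInf_mem ⟨y, hyS⟩ hSbdd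
  have hax₀ : a < x₀ := hc₀.1.trans_le hx₀S.1.1
  have hpos : ∀ z ∈ Ioo a x₀, 0 < g z := by
    intro z hz
    by_contra! hgz
    have hcz : c ≤ z := not_lt.1 fun h ↦ (hstart z ⟨hz.1, h⟩).not_ge hgz
    exact hz.2.not_ge (csInf_le hSbdd ⟨⟨by linarith [hc₀.2], by linarith [hx₀S.1.2, hz.2]⟩, hgz⟩)
  have hleft : ∀ᶠ z in 𝓝[<] x₀, z ∈ Ioo a x₀ := Ioo_mem_nhdsLT hax₀
  have hzero : g x₀ = 0 := le_antisymm hx₀S.2 <|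
    ge_of_tendsto ((hg x₀).continuousAt.tendsto.mono_left nhdsWithin_le_nhds)
      (hleft.mono fun z hz ↦ (hpos z hz).le)
  -- a positive derivative at the zero `x₀` would make `g` negative just to its left
  have hslope : Tendsto (slope g x₀) (𝓝[<] x₀) (𝓝 (g' x₀)) :=
    (hasDerivAt_iff_tendsto_slope.1 (hg x₀)).mono_left (nhdsLT_le_nhdsNE x₀)
  have hnonpos : g' x₀ ≤ 0 := le_of_tendsto hslope <| hleft.mono fun z hz ↦ by
    rw [slope_def_field, hzero, sub_zero]
    exact div_nonpos_of_nonneg_of_nonpos (hpos z hz).le (by linarith [hz.2])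
  exact (hfirst x₀ ⟨hax₀, hx₀S.1.2.trans_lt hy.2⟩ hzero hpos).not_ge hnonpos

namespace besselJDeriv

lemma zero_eq_besselJ (v : ℤ) : besselJDeriv v 0 = besselJ v := by
  ext x; simp [besselJDeriv, besselJ]

lemma hasDerivAt (v : ℤ) (k : ℕ) (x : ℝ) :
    HasDerivAt (besselJDeriv v k) (besselJDeriv v (k + 1) x) x := by
  have hderiv (ϑ y : ℝ) : HasDerivAt (fun y ↦ sin ϑ ^ k * cos (v * ϑ - y * sin ϑ - k * (π / 2)))
      (sin ϑ ^ (k + 1) * cos (v * ϑ - y * sin ϑ - (k + 1 : ℕ) * (π / 2))) y := by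
    have hcos : cos (v * ϑ - y * sin ϑ - (k + 1 : ℕ) * (π / 2))
        = sin (v * ϑ - y * sin ϑ - k * (π / 2)) := by
      rw [← cos_sub_pi_div_two (v * ϑ - y * sin ϑ - k * (π / 2))]; push_cast; ring_nf
    rw [hcos]
    refine ((((hasDerivAt_id' y).mul_const (sin ϑ)).const_sub (v * ϑ)).sub_const
      (k * (π / 2))).cos.const_mul (sin ϑ ^ k) |>.congr_deriv ?_
    ring
  have hbound (ϑ y : ℝ) :
      ‖sin ϑ ^ (k + 1) * cos (v * ϑ - y * sin ϑ - (k + 1 : ℕ) * (π / 2))‖ ≤ 1 := by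
    rw [norm_mul, norm_pow]
    exact mul_le_one₀ (pow_le_one₀ (norm_nonneg _) (abs_sin_le_one ϑ)) (norm_nonneg _)
      (abs_cos_le_one _)
  exact (hasDerivAt_integral_of_dominated_loc_of_deriv_le (a := 0) (b := π) (x₀ := x)
    (bound := fun _ ↦ 1) univ_mem
    (Eventually.of_forall fun y ↦ (by fun_prop : Continuous _).aestronglyMeasurable)
    ((by fun_prop : Continuous _).intervalIntegrable _ _)
    (by fun_prop : Continuous _).aestronglyMeasurable
    (Eventually.of_forall fun ϑ _ y _ ↦ hbound ϑ y) intervalIntegrable_const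
    (Eventually.of_forall fun ϑ _ y _ ↦ hderiv ϑ y)).2.const_mul (1 / π)

lemma succ (m : ℤ) (k : ℕ) (x : ℝ) :
    besselJDeriv m (k + 1) x = (besselJDeriv (m - 1) k x - besselJDeriv (m + 1) k x) / 2 := by
  have hpt (ϑ : ℝ) : sin ϑ ^ (k + 1) * cos (m * ϑ - x * sin ϑ - (k + 1 : ℕ) * (π / 2))
      = (sin ϑ ^ k * cos ((m - 1 : ℤ) * ϑ - x * sin ϑ - k * (π / 2))
        - sin ϑ ^ k * cos ((m + 1 : ℤ) * ϑ - x * sin ϑ - k * (π / 2))) / 2 := by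
    set A := m * ϑ - x * sin ϑ - k * (π / 2)
    have h₀ : (m * ϑ - x * sin ϑ - (k + 1 : ℕ) * (π / 2)) = A - π / 2 := by push_cast; ring
    have h₁ : ((m - 1 : ℤ) * ϑ - x * sin ϑ - k * (π / 2)) = A - ϑ := by push_cast; ring
    have h₂ : ((m + 1 : ℤ) * ϑ - x * sin ϑ - k * (π / 2)) = A + ϑ := by push_cast; ring
    rw [h₀, h₁, h₂, cos_sub_pi_div_two, cos_sub, cos_add, pow_succ]
    ring
  simp only [besselJDeriv, hpt, integral_div]
  rw [integral_sub ((by fun_prop : Continuous _).intervalIntegrable _ _)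
    ((by fun_prop : Continuous _).intervalIntegrable _ _)]
  ring

lemma zero_apply_zero (m : ℤ) : besselJDeriv m 0 0 = if m = 0 then 1 else 0 := by
  split_ifs with hm
  · simp [besselJDeriv, hm, pi_ne_zero]
  · have hm' : (m : ℝ) ≠ 0 := by exact_mod_cast hm
    simp only [besselJDeriv, pow_zero, one_mul, zero_mul, sub_zero, CharP.cast_eq_zero]
    rw [integral_comp_mul_left (fun ϑ ↦ cos ϑ) hm', integral_cos, mul_zero, sin_zero,
      sin_int_mul_pi]
    simp

lemma apply_zero (k : ℕ) (m : ℤ) (hkm : (k : ℤ) ≤ m) :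
    besselJDeriv m k 0 = if (k : ℤ) = m then (2 ^ k)⁻¹ else 0 := by
  induction k generalizing m with
  | zero => simpa [eq_comm] using zero_apply_zero m
  | succ k ih =>
    push_cast at hkm ⊢
    rw [succ, ih (m - 1) (by omega), ih (m + 1) (by omega),
      if_neg (show (k : ℤ) ≠ m + 1 by omega)]
    split_ifs <;> first | omega | simp [pow_succ, div_eq_mul_inv, mul_comm]

lemma continuous (v : ℤ) (k : ℕ) : Continuous (besselJDeriv v k) :=
  continuous_iff_continuousAt.2 fun x ↦ (hasDerivAt v k x).continuousAt

lemma strictMonoOn_Icc {v : ℤ} {k : ℕ} {a b : ℝ}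
    (hpos : ∀ x ∈ Ioo a b, 0 < besselJDeriv v (k + 1) x) :
    StrictMonoOn (besselJDeriv v k) (Icc a b) :=
  strictMonoOn_of_hasDerivWithinAt_pos (convex_Icc a b) (continuous v k).continuousOn
    (fun x _ ↦ (hasDerivAt v k x).hasDerivWithinAt) (by simpa using hpos)

lemma ode (v : ℤ) (x : ℝ) :
    x ^ 2 * besselJDeriv v 2 x + x * besselJDeriv v 1 x
      + (x ^ 2 - v ^ 2) * besselJDeriv v 0 x = 0 := by
  set G : ℝ → ℝ := fun ϑ ↦ (x * cos ϑ + v) * sin (v * ϑ - x * sin ϑ)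
  have hG (ϑ : ℝ) : HasDerivAt G (-(x ^ 2 * (sin ϑ ^ 2 * cos (v * ϑ - x * sin ϑ - (2 : ℕ) * (π / 2)))
      + x * (sin ϑ ^ 1 * cos (v * ϑ - x * sin ϑ - (1 : ℕ) * (π / 2)))
      + (x ^ 2 - v ^ 2) * (sin ϑ ^ 0 * cos (v * ϑ - x * sin ϑ - (0 : ℕ) * (π / 2))))) ϑ := by
    have h := (((hasDerivAt_cos ϑ).const_mul x).add_const (v : ℝ)).mul
      (((hasDerivAt_id' ϑ).const_mul (v : ℝ)).sub ((hasDerivAt_sin ϑ).const_mul x)).sin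
    refine h.congr_deriv ?_
    have h₂ : v * ϑ - x * sin ϑ - (2 : ℕ) * (π / 2) = v * ϑ - x * sin ϑ - π := by push_cast; ring
    have h₁ : v * ϑ - x * sin ϑ - (1 : ℕ) * (π / 2) = v * ϑ - x * sin ϑ - π / 2 := by
      push_cast; ring
    simp only [Pi.sub_apply, h₂, h₁, cos_sub_pi, cos_sub_pi_div_two, sin_sq, Nat.cast_zero,
      zero_mul, sub_zero]
    ring
  have hGπ : G π = 0 := by simp [G, sin_int_mul_pi]
  have hG0 : G 0 = 0 := by simp [G]
  have hint := integral_eq_sub_of_hasDerivAt (fun ϑ _ ↦ hG ϑ)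
    ((by fun_prop : Continuous _).intervalIntegrable 0 π)
  rw [hGπ, hG0, sub_zero, integral_neg, neg_eq_zero,
    integral_add ((by fun_prop : Continuous _).intervalIntegrable _ _)
      ((by fun_prop : Continuous _).intervalIntegrable _ _),
    integral_add ((by fun_prop : Continuous _).intervalIntegrable _ _)
      ((by fun_prop : Continuous _).intervalIntegrable _ _),
    integral_const_mul, integral_const_mul, integral_const_mul] at hint
  simp only [besselJDeriv]
  linear_combination (1 / π) * hint

lemma exists_pos_near_zero {v : ℤ} (hv : 0 ≤ v) :
    ∃ ε > 0, ∀ k : ℕ, (k : ℤ) ≤ v → ∀ x ∈ Ioo 0 ε, 0 < besselJDeriv v k x := by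
  obtain ⟨n, rfl⟩ := Int.eq_ofNat_of_zero_le hv
  have htop : 0 < besselJDeriv n n 0 := by simp [apply_zero]
  obtain ⟨ε, hε, hball⟩ := Metric.isOpen_iff.1 (isOpen_lt continuous_const (continuous n n)) 0 htop
  refine ⟨ε, hε, fun k hk ↦ ?_⟩
  obtain ⟨j, hj, rfl⟩ : ∃ j ≤ n, k = n - j := ⟨n - k, by omega, by omega⟩
  clear hk
  induction j with
  | zero => exact fun x hx ↦ hball (by simp [abs_of_pos hx.1, hx.2])
  | succ j ih =>
    intro x hx
    have hzero : besselJDeriv n (n - (j + 1)) 0 = 0 := by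
      rw [apply_zero _ _ (by omega), if_neg (by omega)]
    have hmono : StrictMonoOn (besselJDeriv n (n - (j + 1))) (Icc 0 ε) :=
      strictMonoOn_Icc (by rw [show n - (j + 1) + 1 = n - j by omega]; exact ih (by omega))
    simpa [hzero] using hmono (left_mem_Icc.2 hε.le) (Ioo_subset_Icc_self hx) hx.1

lemma one_pos_of_mem_Ioo {v : ℤ} (hv : 1 ≤ v) : ∀ x ∈ Ioo 0 (v : ℝ), 0 < besselJDeriv v 1 x := by
  obtain ⟨ε, hε, hnear⟩ := exists_pos_near_zero (by omega : 0 ≤ v)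
  refine pos_on_Ioo_of_deriv_pos_at_first_zero (hasDerivAt v 1) hε (hnear 1 (by simpa)) ?_
  intro x hx hzero hpos
  have hJ : 0 < besselJDeriv v 0 x := by
    have := strictMonoOn_Icc hpos (left_mem_Icc.2 hx.1.le) (right_mem_Icc.2 hx.1.le) hx.1
    rwa [apply_zero 0 v (by omega), if_neg (by omega)] at this
  -- at a first zero of `J'`, Bessel's equation reads `x² J'' = (v² - x²) J > 0`
  have hode := ode v x
  rw [hzero] at hode
  have hx2 : 0 < x ^ 2 := pow_pos hx.1 2
  have hvx : 0 < (v : ℝ) ^ 2 - x ^ 2 := by nlinarith [hx.1, hx.2]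
  nlinarith [mul_pos hvx hJ]

end besselJDeriv

open besselJDeriv in
theorem besselJ_strictMonoOn_Icc {v : ℤ} (hv : 1 ≤ v) : StrictMonoOn (besselJ v) (Icc 0 v) :=
  zero_eq_besselJ v ▸ strictMonoOn_Icc (one_pos_of_mem_Ioo hv)

theorem besselJ_strictMono_in_rho (v : ℤ) (hv : 1 ≤ v) :
    StrictMonoOn (fun ρ : ℝ => besselJ v (v * ρ)) (Set.Ioo 0 1) ∧
      ∀ ρ ∈ Set.Ioo (0 : ℝ) 1, besselJ v (v * ρ) < besselJ v v := by
  have hv₀ : (0 : ℝ) < v := by exact_mod_cast hv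
  have hmem : ∀ ρ ∈ Ioc (0 : ℝ) 1, (v : ℝ) * ρ ∈ Icc 0 (v : ℝ) := fun ρ hρ ↦
    ⟨by nlinarith [hρ.1], by nlinarith [hρ.2]⟩
  refine ⟨fun ρ₁ h₁ ρ₂ h₂ h ↦ besselJ_strictMonoOn_Icc hv (hmem ρ₁ (Ioo_subset_Ioc_self h₁))
    (hmem ρ₂ (Ioo_subset_Ioc_self h₂)) (by gcongr), fun ρ hρ ↦ ?_⟩
  simpa using besselJ_strictMonoOn_Icc hv (hmem ρ (Ioo_subset_Ioc_self hρ))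
    (hmem 1 ⟨one_pos, le_rfl⟩) (by nlinarith [hρ.2])
end

section
/- For ϑ ∈ (0, π) and ρ ∈ (0, 1], the function F(ϑ,ρ) = log((ϑ + √(ϑ² − ρ² sin²ϑ))/(ρ sin ϑ)) − cot(ϑ)√(ϑ² − ρ² sin²ϑ) is nonnegative. -/
open Real

/-- Padé lower bound for the logarithm: `2(x-1) ≤ (x+1) log x` for `x ≥ 1`. -/
lemma pade_log {x : ℝ} (hx : 1 ≤ x) : 2 * (x - 1) ≤ (x + 1) * Real.log x := by
  set g : ℝ → ℝ := fun y => (y + 1) * Real.log y - 2 * (y - 1) with hg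
  have hmono : MonotoneOn g (Set.Ici (1 : ℝ)) := by
    have hderiv : ∀ y ∈ interior (Set.Ici (1 : ℝ)),
        HasDerivAt g (Real.log y + (y + 1) / y - 2) y := by
      intro y hy
      rw [interior_Ici] at hy
      have hy0 : (0 : ℝ) < y := by linarith [Set.mem_Ioi.mp hy]
      have h1 : HasDerivAt (fun y : ℝ => (y + 1) * Real.log y)
          (1 * Real.log y + (y + 1) * y⁻¹) y :=
        (((hasDerivAt_id y).add_const 1).mul (Real.hasDerivAt_log hy0.ne'))
      have h2 : HasDerivAt g (1 * Real.log y + (y + 1) * y⁻¹ - 2) y :=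
        (h1.sub (((hasDerivAt_id y).sub_const 1).const_mul 2)).congr_deriv (by ring)
      convert h2 using 1
      field_simp
    apply monotoneOn_of_deriv_nonneg (convex_Ici 1)
    · apply ContinuousOn.sub
      · exact (continuousOn_id.add continuousOn_const).mul
          (Real.continuousOn_log.mono (by intro y hy; simp at hy ⊢; linarith))
      · fun_prop
    · intro y hy
      exact (hderiv y hy).differentiableAt.differentiableWithinAt
    · intro y hy
      rw [(hderiv y hy).deriv]
      rw [interior_Ici] at hy
      have hy1 : (1 : ℝ) < y := hy
      have hy0 : (0 : ℝ) < y := by linarith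
      have hlog : 1 - y⁻¹ ≤ Real.log y := Real.one_sub_inv_le_log_of_pos hy0
      have : (y + 1) / y = 1 + y⁻¹ := by field_simp
      rw [this]
      have hinv : y⁻¹ ≤ 1 := by rw [inv_le_one_iff₀]; right; linarith
      linarith
  have h1 : g 1 ≤ g x := hmono (by simp) (by simpa using hx) hx
  simp only [hg] at h1
  simp at h1
  linarith

theorem F_nonneg (ϑ ρ : ℝ) (hϑ : ϑ ∈ Set.Ioo 0 π) (hρ : ρ ∈ Set.Ioc (0 : ℝ) 1) :
    0 ≤ Real.log ((ϑ + Real.sqrt (ϑ ^ 2 - ρ ^ 2 * Real.sin ϑ ^ 2)) / (ρ * Real.sin ϑ)) -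
        (Real.cos ϑ / Real.sin ϑ) * Real.sqrt (ϑ ^ 2 - ρ ^ 2 * Real.sin ϑ ^ 2) := by
  obtain ⟨hϑ0, hϑπ⟩ := hϑ
  obtain ⟨hρ0, hρ1⟩ := hρ
  have hs : 0 < Real.sin ϑ := Real.sin_pos_of_pos_of_lt_pi hϑ0 hϑπ
  set s := Real.sin ϑ with hsdef
  set a := ρ * s with hadef
  have ha0 : 0 < a := mul_pos hρ0 hs
  have hsϑ : s < ϑ := Real.sin_lt hϑ0
  have haϑ : a ≤ ϑ := by nlinarith
  have harg : ϑ ^ 2 - ρ ^ 2 * s ^ 2 = ϑ ^ 2 - a ^ 2 := by rw [hadef]; ring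
  rw [harg]
  set R := Real.sqrt (ϑ ^ 2 - a ^ 2) with hRdef
  have hsub : 0 ≤ ϑ ^ 2 - a ^ 2 := by nlinarith
  have hR0 : 0 ≤ R := Real.sqrt_nonneg _
  have hR2 : R ^ 2 = ϑ ^ 2 - a ^ 2 := Real.sq_sqrt hsub
  have hRϑ : R ≤ ϑ := by nlinarith [hR2, hR0]
  -- the argument of the log is ≥ 1
  have hz1 : 1 ≤ (ϑ + R) / a := by
    rw [le_div_iff₀ ha0]; linarith
  have hz0 : 0 < (ϑ + R) / a := lt_of_lt_of_le one_pos hz1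
  set L := Real.log ((ϑ + R) / a) with hLdef
  have hL0 : 0 ≤ L := Real.log_nonneg hz1
  -- key: R / ϑ ≤ L, i.e. R ≤ ϑ * L
  have key : R ≤ ϑ * L := by
    set w := ((ϑ + R) / a) ^ 2 with hwdef
    have hw1 : 1 ≤ w := one_le_pow₀ hz1
    have hpade : 2 * (w - 1) ≤ (w + 1) * Real.log w := pade_log hw1
    have hlogw : Real.log w = 2 * L := by
      rw [hwdef, Real.log_pow]; push_cast; ring
    rw [hlogw] at hpade
    -- algebraic identity: ϑ * (w - 1) = R * (w + 1)
    have hident : ϑ * (w - 1) = R * (w + 1) := by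
      have hane : a ≠ 0 := ha0.ne'
      rw [hwdef, div_pow]
      field_simp
      nlinarith [hR2]
    have hw1' : 0 < w + 1 := by linarith
    nlinarith [hpade, hident, hw1']
  by_cases hc : Real.cos ϑ ≤ 0
  · have : Real.cos ϑ / s * R ≤ 0 :=
      mul_nonpos_of_nonpos_of_nonneg (div_nonpos_of_nonpos_of_nonneg hc hs.le) hR0
    linarith
  · push_neg at hc
    have hϑhalf : ϑ < π / 2 := by
      by_contra h
      push_neg at h
      exact absurd (Real.cos_nonpos_of_pi_div_two_le_of_le h (by linarith [Real.pi_pos])) 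
        (not_le.mpr hc)
    have htan : ϑ < Real.tan ϑ := Real.lt_tan hϑ0 hϑhalf
    rw [Real.tan_eq_sin_div_cos] at htan
    have hcs : ϑ * Real.cos ϑ < s := by
      rw [lt_div_iff₀ hc] at htan
      linarith
    -- Real.cos ϑ / s * R ≤ R / ϑ ≤ L
    have h1 : Real.cos ϑ * R ≤ s * L := by
      have h2 : Real.cos ϑ * R ≤ Real.cos ϑ * (ϑ * L) := by
        exact mul_le_mul_of_nonneg_left key hc.le
      have h3 : Real.cos ϑ * ϑ * L ≤ s * L := by
        apply mul_le_mul_of_nonneg_right _ hL0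
        nlinarith
      linarith [h2, h3]
    have heq : Real.cos ϑ / s * R = Real.cos ϑ * R / s := by ring
    rw [heq, sub_nonneg, div_le_iff₀ hs]
    linarith [h1]
end
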